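/- arXiv:0903.4326 — 6 statements merged into one kernel-verified Lean document; each statement's English description precedes it below -/
import Mathlib

section
/- Let C_B be an invertible n×n matrix over ℚ and let m ∈ ℚ^n be a row vector. Let C be the (n+1)×(n+1) block matrix C = [[1, 0], [mᵀ, C_B]] (top-left entry 1, top-right block the zero row, bottom-left block the column vector mᵀ, bottom-right block C_B). Set φ_B = −C_B^{−T}·C_B and ⟨m, m⟩ = m·C_B^{−T}·mᵀ. Then C is invertible and −C^{−T}·C = [[⟨m, m⟩ − 1, −m·φ_B], [−C_B^{−T}·mᵀ, φ_B]]. (This computes the Coxeter matrix of a one-point extension B[M] from the Coxeter matrix of B, where m is the dimension vector of M, since the Cartan matrix of B[M] is [[1, 0], [mᵀ, C_B]].) -/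
open Matrix Finset

/-- Coxeter matrix of a one-point extension: if `C_B` is invertible over `ℚ`, `m` is a row
vector, and `C = [[1, 0], [mᵀ, C_B]]` (the Cartan matrix of the one-point extension `B[M]`
when `C_B` is the Cartan matrix of `B` and `m = dim M`), then `C` is invertible and
`−C⁻ᵀ·C = [[⟨m, m⟩ − 1, −m·φ_B], [−C_B⁻ᵀ·mᵀ, φ_B]]`, where `φ_B = −C_B⁻ᵀ·C_B` and
`⟨m, m⟩ = m·C_B⁻ᵀ·mᵀ`. -/
theorem coxeter_onePointExtension {n : ℕ} (CB : Matrix (Fin n) (Fin n) ℚ)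
    (hCB : IsUnit CB.det) (m : Fin n → ℚ)
    (C : Matrix (Fin 1 ⊕ Fin n) (Fin 1 ⊕ Fin n) ℚ)
    (hC : C = Matrix.fromBlocks (1 : Matrix (Fin 1) (Fin 1) ℚ) 0
        (Matrix.of fun i _ => m i) CB)
    (φB : Matrix (Fin n) (Fin n) ℚ) (hφB : φB = -(CBᵀ⁻¹ * CB))
    (mm : ℚ) (hmm : mm = m ⬝ᵥ (CBᵀ⁻¹ *ᵥ m)) :
    IsUnit C.det ∧
      -(Cᵀ⁻¹ * C) =
        Matrix.fromBlocks
          (Matrix.of fun _ _ => mm - 1)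
          (Matrix.of fun _ j => -(m ᵥ* φB) j)
          (Matrix.of fun i _ => -(CBᵀ⁻¹ *ᵥ m) i)
          φB := by
  have hdet : C.det = CB.det := by
    rw [hC, Matrix.det_fromBlocks_zero₁₂, Matrix.det_one, one_mul]
  have hunit : IsUnit C.det := hdet ▸ hCB
  refine ⟨hunit, ?_⟩
  have hCBT : IsUnit CBᵀ.det := by rwa [Matrix.det_transpose]
  have hE : CBᵀ * CBᵀ⁻¹ = 1 := Matrix.mul_nonsing_inv _ hCBT
  set rowm : Matrix (Fin 1) (Fin n) ℚ := Matrix.of fun _ j => m j with hrowm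
  set colm : Matrix (Fin n) (Fin 1) ℚ := Matrix.of fun i _ => m i with hcolm
  have hCT : Cᵀ = Matrix.fromBlocks 1 rowm 0 CBᵀ := by
    rw [hC, Matrix.fromBlocks_transpose, Matrix.transpose_one, Matrix.transpose_zero]
    rfl
  have hinv : Cᵀ⁻¹ = Matrix.fromBlocks 1 (-(rowm * CBᵀ⁻¹)) 0 CBᵀ⁻¹ := by
    apply Matrix.inv_eq_right_inv
    rw [hCT, Matrix.fromBlocks_multiply]
    simp [hE, Matrix.fromBlocks_one]
  rw [hinv, hC, Matrix.fromBlocks_multiply, hφB]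
  ext (i | i) (j | j) <;>
    simp [Matrix.fromBlocks, Matrix.mul_apply, Matrix.mulVec, Matrix.vecMul,
      dotProduct, hmm, Finset.mul_sum, hrowm, hcolm, Fin.eq_zero,
      Finset.sum_mul, sub_eq_add_neg] <;>
    first
      | rfl
      | (rw [Finset.sum_comm]; apply Finset.sum_congr rfl; intros
         apply Finset.sum_congr rfl; intros; ring)
end

section
/- Let C_B be an invertible n×n matrix over ℚ, m ∈ ℚ^n a row vector, φ_B = −C_B^{−T}·C_B, and ⟨x, y⟩ = x·C_B^{−T}·yᵀ. Let φ_A be the (n+1)×(n+1) block matrix [[⟨m, m⟩ − 1, −m·φ_B], [−C_B^{−T}·mᵀ, φ_B]]. Write the characteristic polynomials χ_A(x) = det(x·I_{n+1} − φ_A) = Σ_{i=0}^{n+1} λ_i^A x^i and χ_B(x) = det(x·I_n − φ_B) = Σ_{i=0}^{n} λ_i^B x^i, with the convention λ_j^B = 0 for j > n. Then for every integer ℓ with 0 ≤ ℓ ≤ n: λ_{n+1−ℓ}^A = λ_{n−ℓ}^B − (⟨m, m⟩ − 1)·λ_{n−(ℓ−1)}^B − Σ_{i=1}^{ℓ−1}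 λ_{n−ℓ+i+1}^B · ⟨m·φ_B^i, m⟩. -/
/-!
The characteristic matrix of the bordered matrix `φ_A` is again bordered, with corner
`X - a`, and a bordered determinant is `(X - a) · det D - u · adj D · v`. For `D = X - φ_B`,
Cayley–Hamilton and a telescoping sum give `adj D = ∑ⱼ (divX^[j+1] χ_B) φ_Bʲ`, hence
`χ_A = (X - a) χ_B - ∑ⱼ divX^[j+1] χ_B · u φ_Bʲ v`. With `u = -m φ_B` and `v = -C_B⁻ᵀ mᵀ`
the scalar `u φ_Bʲ v` is `⟨m φ_B^{j+1}, m⟩`, and comparing coefficients gives the formula.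
-/

open Matrix Finset Polynomial

namespace Polynomial

variable {R : Type*} [Semiring R]

theorem coeff_divX_iterate (k : ℕ) (p : R[X]) (i : ℕ) :
    (divX^[k] p).coeff i = p.coeff (i + k) := by
  induction k generalizing p with
  | zero => rfl
  | succ k ih => rw [Function.iterate_succ_apply, ih, coeff_divX, add_assoc]

theorem divX_iterate_of_natDegree_le {p : R[X]} {N : ℕ} (hN : p.natDegree ≤ N) :
    divX^[N] p = C (p.coeff N) := by
  ext (_ | i)
  · simp [coeff_divX_iterate]
  · rw [coeff_divX_iterate, coeff_C_succ, coeff_eq_zero_of_natDegree_lt (by omega)]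

theorem sum_range_coeff_mul_eq_sum_Icc (p : R[X]) (w : ℕ → R) {t K N : ℕ}
    (hp : p.natDegree ≤ t + K + 1) (hK : K ≤ N) :
    ∑ j ∈ range N, p.coeff (t + j + 2) * w (j + 1) =
      ∑ i ∈ Icc 1 K, p.coeff (t + i + 1) * w i := by
  have hshift : ∑ j ∈ range N, p.coeff (t + j + 2) * w (j + 1) =
      ∑ i ∈ Icc 1 N, p.coeff (t + i + 1) * w i := by
    rw [← Ico_add_one_right_eq_Icc, sum_Ico_eq_sum_range, Nat.add_sub_cancel]
    refine sum_congr rfl fun j _ => ?_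
    rw [add_comm 1 j, show t + (j + 1) + 1 = t + j + 2 by omega]
  rw [hshift]
  refine (sum_subset (Icc_subset_Icc_right hK) fun i hiN hiK => ?_).symm
  rw [coeff_eq_zero_of_natDegree_lt, zero_mul]
  simp only [mem_Icc, not_and, not_le] at hiN hiK
  omega

end Polynomial

namespace Matrix

variable {R : Type*} [CommRing R] {n : Type*} [Fintype n] [DecidableEq n]

theorem charpoly_natDegree_le (M : Matrix n n R) : M.charpoly.natDegree ≤ Fintype.card n := by
  nontriviality R
  exact (charpoly_natDegree_eq_dim M).le

theorem charmatrix_eq_smul_one_sub (M : Matrix n n R) :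
    charmatrix M = (X : R[X]) • 1 - M.map C := by
  ext i j
  by_cases h : i = j <;> simp [h]

theorem charmatrix_mul_sum_divX_iterate (M : Matrix n n R) {p : R[X]} {N : ℕ}
    (hN : p.natDegree ≤ N) :
    charmatrix M * ∑ j ∈ range N, divX^[j + 1] p • (M ^ j).map C =
      p • 1 - (aeval M p).map C := by
  set f : ℕ → Matrix n n R[X] := fun j => divX^[j] p • (M ^ j).map C
  have hterm : ∀ j, charmatrix M * (divX^[j + 1] p • (M ^ j).map C) =
      f j - f (j + 1) - C (p.coeff j) • (M ^ j).map C := by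
    intro j
    have hX : divX^[j + 1] p * X = divX^[j] p - C (p.coeff j) := by
      have h := divX_mul_X_add (divX^[j] p)
      rw [coeff_divX_iterate, zero_add] at h
      rw [Function.iterate_succ_apply']
      exact eq_sub_of_add_eq h
    simp only [f, charmatrix_eq_smul_one_sub, Matrix.sub_mul, smul_mul_assoc, Matrix.one_mul,
      Matrix.mul_smul, ← Matrix.map_mul, ← pow_succ', smul_sub, smul_smul, hX, sub_smul]
    abel
  have hCH : (aeval M p).map C = ∑ j ∈ range (N + 1), C (p.coeff j) • (M ^ j).map C := by
    rw [aeval_eq_sum_range' (Nat.lt_succ_of_le hN)]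
    simp only [← RingHom.mapMatrix_apply, map_sum]
    refine sum_congr rfl fun j _ => ?_
    ext
    simp
  rw [Matrix.mul_sum, sum_congr rfl fun j _ => hterm j, sum_sub_distrib, sum_range_sub', hCH,
    sum_range_succ]
  have hf0 : f 0 = p • 1 := by simp [f]
  have hfN : f N = C (p.coeff N) • (M ^ N).map C := by
    simp only [f, divX_iterate_of_natDegree_le hN]
  rw [hf0, hfN]
  abel

theorem adjugate_charmatrix (M : Matrix n n R) :
    adjugate (charmatrix M) =
      ∑ j ∈ range (Fintype.card n), divX^[j + 1] M.charpoly • (M ^ j).map C := by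
  set Q := ∑ j ∈ range (Fintype.card n), divX^[j + 1] M.charpoly • (M ^ j).map C
  have hQ : charmatrix M * Q = M.charpoly • 1 := by
    rw [charmatrix_mul_sum_divX_iterate M (charpoly_natDegree_le M), aeval_self_charpoly,
      Matrix.map_zero _ (map_zero C), sub_zero]
  have hsmul : M.charpoly • Q = M.charpoly • adjugate (charmatrix M) :=
    calc M.charpoly • Q = adjugate (charmatrix M) * charmatrix M * Q := by
          rw [adjugate_mul, Matrix.smul_mul, Matrix.one_mul]; rfl
      _ = M.charpoly • adjugate (charmatrix M) := by
          rw [Matrix.mul_assoc, hQ, Matrix.mul_smul, Matrix.mul_one]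
  exact Matrix.ext fun i j =>
    (charpoly_monic M).isRegular.left (congrFun (congrFun hsmul i) j).symm

section Bordered

variable {ι : Type*} [Unique ι] [DecidableEq ι] [Fintype ι] (a : R) (u v : n → R)

theorem det_fromBlocks_replicateRow_replicateCol (D : Matrix n n R) (hD : IsLeftRegular D.det) :
    (fromBlocks (of fun _ _ => a) (replicateRow ι u) (replicateCol ι v) D).det =
      a * D.det - u ⬝ᵥ (adjugate D *ᵥ v) := by
  set P : Matrix (ι ⊕ n) (ι ⊕ n) R :=
    fromBlocks (D.det • 1) (-(replicateRow ι u * adjugate D)) 0 1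
  have hP : P.det = D.det := by simp [P]
  have hPX : P * fromBlocks (of fun _ _ => a) (replicateRow ι u) (replicateCol ι v) D =
      fromBlocks (of fun _ _ => D.det * a - u ⬝ᵥ (adjugate D *ᵥ v)) 0 (replicateCol ι v) D := by
    rw [fromBlocks_multiply]
    congr 1
    · ext
      rw [Matrix.add_apply, Matrix.neg_mul, Matrix.neg_apply, ← replicateRow_vecMul,
        replicateRow_mul_replicateCol_apply, ← dotProduct_mulVec]
      simp [sub_eq_add_neg]
    · rw [Matrix.neg_mul, Matrix.mul_assoc, adjugate_mul]
      simp
    · simp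
    · simp
  have h := congrArg det hPX
  rw [det_mul, hP, det_fromBlocks_zero₁₂, det_unique (of _), of_apply] at h
  exact hD (h.trans (by ring))

theorem charpoly_fromBlocks_replicateRow_replicateCol (M : Matrix n n R) :
    (fromBlocks (of fun _ _ => a) (replicateRow ι u) (replicateCol ι v) M).charpoly =
      (X - C a) * M.charpoly -
        ∑ j ∈ range (Fintype.card n), divX^[j + 1] M.charpoly * C (u ⬝ᵥ (M ^ j *ᵥ v)) := by
  have hblocks :
      charmatrix (fromBlocks (of fun _ _ => a) (replicateRow ι u) (replicateCol ι v) M) =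
      fromBlocks (of fun _ _ => X - C a) (replicateRow ι (-(C ∘ u)))
        (replicateCol ι (-(C ∘ v))) (charmatrix M) := by
    rw [charmatrix_fromBlocks]
    congr 1
    ext i j
    rw [Subsingleton.elim i j, charmatrix_apply_eq, of_apply, of_apply]
  rw [charpoly, hblocks, det_fromBlocks_replicateRow_replicateCol _ _ _ _
    (charpoly_monic M).isRegular.left, adjugate_charmatrix]
  congr 1
  rw [sum_mulVec, dotProduct_sum]
  refine sum_congr rfl fun j _ => ?_
  have hmap : (M ^ j).map C *ᵥ (C ∘ v) = C ∘ (M ^ j *ᵥ v) :=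
    funext fun i => (RingHom.map_mulVec C _ v i).symm
  rw [smul_mulVec, mulVec_neg, hmap, smul_neg, dotProduct_neg, neg_dotProduct, neg_neg,
    dotProduct_smul, ← RingHom.map_dotProduct, smul_eq_mul]

theorem coeff_charpoly_fromBlocks_replicateRow_replicateCol_succ (M : Matrix n n R) (t : ℕ) :
    (fromBlocks (of fun _ _ => a) (replicateRow ι u) (replicateCol ι v) M).charpoly.coeff
        (t + 1) =
      M.charpoly.coeff t - a * M.charpoly.coeff (t + 1) -
        ∑ j ∈ range (Fintype.card n), M.charpoly.coeff (t + j + 2) * (u ⬝ᵥ (M ^ j *ᵥ v)) := by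
  rw [charpoly_fromBlocks_replicateRow_replicateCol, coeff_sub, sub_mul, coeff_sub, coeff_X_mul,
    coeff_C_mul, finsetSum_coeff]
  congr 1
  refine sum_congr rfl fun j _ => ?_
  rw [coeff_mul_C, coeff_divX_iterate, show t + 1 + (j + 1) = t + j + 2 by omega]

end Bordered

end Matrix

theorem coxeterPolynomial_onePointExtension_general {n : ℕ} (CB : Matrix (Fin n) (Fin n) ℚ)
    (m : Fin n → ℚ) (φB : Matrix (Fin n) (Fin n) ℚ)
    (bil : (Fin n → ℚ) → (Fin n → ℚ) → ℚ)
    (hbil : ∀ x y, bil x y = x ⬝ᵥ (CBᵀ⁻¹ *ᵥ y))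
    (φA : Matrix (Fin 1 ⊕ Fin n) (Fin 1 ⊕ Fin n) ℚ)
    (hφA : φA = Matrix.fromBlocks
        (Matrix.of fun _ _ => bil m m - 1)
        (Matrix.of fun _ j => -(m ᵥ* φB) j)
        (Matrix.of fun i _ => -(CBᵀ⁻¹ *ᵥ m) i)
        φB)
    (ℓ : ℕ) (hℓ : ℓ ≤ n) :
    (Matrix.charpoly φA).coeff (n + 1 - ℓ) =
      (Matrix.charpoly φB).coeff (n - ℓ) -
        (bil m m - 1) * (Matrix.charpoly φB).coeff (n - ℓ + 1) -
        ∑ i ∈ Finset.Icc 1 (ℓ - 1),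
          (Matrix.charpoly φB).coeff (n - ℓ + i + 1) * bil (m ᵥ* φB ^ i) m := by
  have hφA' : φA = fromBlocks (of fun _ _ => bil m m - 1) (replicateRow (Fin 1) (-(m ᵥ* φB)))
      (replicateCol (Fin 1) (-(CBᵀ⁻¹ *ᵥ m))) φB := hφA
  have hbil_pow (j : ℕ) :
      -(m ᵥ* φB) ⬝ᵥ (φB ^ j *ᵥ -(CBᵀ⁻¹ *ᵥ m)) = bil (m ᵥ* φB ^ (j + 1)) m := by
    rw [hbil, mulVec_neg, dotProduct_neg, neg_dotProduct, neg_neg, dotProduct_mulVec,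
      vecMul_vecMul, ← pow_succ']
  rw [show n + 1 - ℓ = n - ℓ + 1 by omega, hφA',
    coeff_charpoly_fromBlocks_replicateRow_replicateCol_succ, Fintype.card_fin]
  simp only [hbil_pow]
  congr 1
  refine sum_range_coeff_mul_eq_sum_Icc _ (fun i => bil (m ᵥ* φB ^ i) m) ?_ (by omega)
  exact (charpoly_natDegree_le φB).trans (by rw [Fintype.card_fin]; omega)

/-- Happel's formula for the Coxeter polynomial of a one-point extension: if `C_B` is an
invertible `n × n` matrix over `ℚ`, `m` a row vector, `φ_B = −C_B⁻ᵀ·C_B`,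
`⟨x, y⟩ = x·C_B⁻ᵀ·yᵀ`, and `φ_A = [[⟨m, m⟩ − 1, −m·φ_B], [−C_B⁻ᵀ·mᵀ, φ_B]]` (the Coxeter
matrix of the one-point extension), then writing `λ_i^A`, `λ_i^B` for the coefficients of
the characteristic polynomials `χ_A = det(x·I − φ_A)`, `χ_B = det(x·I − φ_B)` (with
`λ_j^B = 0` for `j > n`, as is automatic for `Polynomial.coeff`), for all `0 ≤ ℓ ≤ n`:
`λ_{n+1−ℓ}^A = λ_{n−ℓ}^B − (⟨m,m⟩ − 1)·λ_{n−(ℓ−1)}^B − Σ_{i=1}^{ℓ−1} λ_{n−ℓ+i+1}^B·⟨m·φ_B^i, m⟩`.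
(Here `n − (ℓ − 1)` is rendered as `n − ℓ + 1` to avoid truncated subtraction.) -/
theorem coxeterPolynomial_onePointExtension {n : ℕ} (CB : Matrix (Fin n) (Fin n) ℚ)
    (hCB : IsUnit CB.det) (m : Fin n → ℚ)
    (φB : Matrix (Fin n) (Fin n) ℚ) (hφB : φB = -(CBᵀ⁻¹ * CB))
    (bil : (Fin n → ℚ) → (Fin n → ℚ) → ℚ)
    (hbil : ∀ x y, bil x y = x ⬝ᵥ (CBᵀ⁻¹ *ᵥ y))
    (φA : Matrix (Fin 1 ⊕ Fin n) (Fin 1 ⊕ Fin n) ℚ)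
    (hφA : φA = Matrix.fromBlocks
        (Matrix.of fun _ _ => bil m m - 1)
        (Matrix.of fun _ j => -(m ᵥ* φB) j)
        (Matrix.of fun i _ => -(CBᵀ⁻¹ *ᵥ m) i)
        φB)
    (ℓ : ℕ) (hℓ : ℓ ≤ n) :
    (Matrix.charpoly φA).coeff (n + 1 - ℓ) =
      (Matrix.charpoly φB).coeff (n - ℓ) -
        (bil m m - 1) * (Matrix.charpoly φB).coeff (n - ℓ + 1) -
        ∑ i ∈ Finset.Icc 1 (ℓ - 1),
          (Matrix.charpoly φB).coeff (n - ℓ + i + 1) * bil (m ᵥ* φB ^ i) m :=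
  coxeterPolynomial_onePointExtension_general CB m φB bil hbil φA hφA ℓ hℓ
end

section
/- Let a, b, c be integers with 1 ≤ a ≤ b ≤ c and let P_{a,b,c}(x) = (Σ_{i=0}^{a} x^i)(Σ_{i=0}^{b+c+1} x^i) − x·(Σ_{i=0}^{a−1} x^i)(Σ_{i=0}^{b} x^i)(Σ_{i=0}^{c} x^i) ∈ ℤ[x]. Then for every integer ℓ with 0 ≤ ℓ ≤ a, the coefficient of x^{(a+b+c)−ℓ} in P_{a,b,c}(x) equals (1−ℓ)(2+ℓ)/2. -/
open Polynomial Finset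

lemma coeff_geom (m n : ℕ) : (∑ i ∈ Finset.range m, (X : ℤ[X]) ^ i).coeff n = if n < m then 1 else 0 := by
  rw [Polynomial.finset_sum_coeff]
  simp [Polynomial.coeff_X_pow, Finset.sum_ite_eq, Finset.mem_range]

lemma coeff_geom_mul (m k n : ℕ) :
    ((∑ i ∈ Finset.range m, (X : ℤ[X]) ^ i) * ∑ i ∈ Finset.range k, (X : ℤ[X]) ^ i).coeff n
      = (min m (n + 1) - (n + 1 - k) : ℕ) := by
  rw [Finset.sum_mul]
  rw [Polynomial.finset_sum_coeff]
  have : ∀ i ∈ Finset.range m,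
      ((X : ℤ[X]) ^ i * ∑ j ∈ Finset.range k, (X : ℤ[X]) ^ j).coeff n
        = if i ≤ n ∧ n - i < k then (1:ℤ) else 0 := by
    intro i _
    rw [mul_comm, Polynomial.coeff_mul_X_pow', coeff_geom]
    by_cases h1 : i ≤ n <;> by_cases h2 : n - i < k <;> simp [h1, h2]
  rw [Finset.sum_congr rfl this, Finset.sum_boole]
  congr 1
  have : (Finset.range m).filter (fun i => i ≤ n ∧ n - i < k) = Finset.Ico (n + 1 - k) (min m (n + 1)) := by
    ext i
    simp only [Finset.mem_filter, Finset.mem_range, Finset.mem_Ico]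
    omega
  rw [this, Nat.card_Ico]

lemma sum_tri (a ℓ : ℕ) (h : ℓ ≤ a) :
    (∑ i ∈ Finset.range a, ((ℓ + 2 + i - a : ℕ) : ℤ)) * 2
      = ((ℓ:ℤ)+1)*((ℓ:ℤ)+2) - (if ℓ = a then 2 else 0) := by
  have hrefl : (∑ i ∈ Finset.range a, ((ℓ + 2 + i - a : ℕ) : ℤ))
      = ∑ i ∈ Finset.range a, ((ℓ + 1 - i : ℕ) : ℤ) := by
    rw [← Finset.sum_range_reflect]
    apply Finset.sum_congr rfl
    intro i hi
    simp only [Finset.mem_range] at hi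
    congr 1
    omega
  have gauss : ∀ n : ℕ, (∑ i ∈ Finset.range n, (i : ℤ)) * 2 = (n:ℤ) * ((n:ℤ) - 1) := by
    intro n
    have h2 : ((∑ i ∈ Finset.range n, i) * 2 : ℕ) = (n * (n-1) : ℕ) :=
      Finset.sum_range_id_mul_two n
    rcases Nat.eq_zero_or_pos n with h0 | h0
    · subst h0; simp
    · have hc := congrArg (Nat.cast : ℕ → ℤ) h2
      push_cast [Nat.cast_sub h0] at hc
      linarith
  rw [hrefl]
  rcases le_or_gt (ℓ + 2) a with hca | hca
  · have hne : ¬ ℓ = a := by omega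
    rw [if_neg hne]
    have hsub : (∑ i ∈ Finset.range a, ((ℓ + 1 - i : ℕ) : ℤ))
        = ∑ i ∈ Finset.range (ℓ + 2), ((ℓ + 1 - i : ℕ) : ℤ) := by
      rw [Finset.sum_subset (Finset.range_subset_range.2 hca)]
      intro i hi hni
      simp only [Finset.mem_range] at hi hni
      have : ℓ + 1 - i = 0 := by omega
      simp [this]
    rw [hsub, ← Finset.sum_range_reflect]
    have : ∀ i ∈ Finset.range (ℓ + 2), ((ℓ + 1 - (ℓ + 2 - 1 - i) : ℕ) : ℤ) = (i : ℤ) := by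
      intro i hi
      simp only [Finset.mem_range] at hi
      congr 1
      omega
    rw [Finset.sum_congr rfl this, gauss]
    push_cast
    ring
  · have : ∀ i ∈ Finset.range a, ((ℓ + 1 - i : ℕ) : ℤ) = ((ℓ:ℤ) + 1 - (i:ℤ)) := by
      intro i hi
      simp only [Finset.mem_range] at hi
      have hi' : i ≤ ℓ + 1 := by omega
      push_cast [Nat.cast_sub hi']
      ring
    rw [Finset.sum_congr rfl this, Finset.sum_sub_distrib, Finset.sum_const, Finset.card_range]
    rw [sub_mul, gauss]
    rcases (by omega : ℓ = a ∨ a = ℓ + 1) with h1 | h1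
    · subst h1; rw [if_pos rfl]; ring
    · have hne : ¬ ℓ = a := by omega
      rw [if_neg hne, h1]; push_cast; ring

/-- The coefficients of the Coxeter polynomial (given by Boldt's formula)
`P_{a,b,c}(x) = (Σ_{i=0}^{a} x^i)(Σ_{i=0}^{b+c+1} x^i) − x·(Σ_{i=0}^{a−1} x^i)(Σ_{i=0}^{b} x^i)(Σ_{i=0}^{c} x^i)`
of the star tree `T_{a,b,c}` satisfy: for `0 ≤ ℓ ≤ a`, the coefficient of
`x^{(a+b+c)−ℓ}` equals `(1−ℓ)(2+ℓ)/2`. -/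
theorem coeff_coxeterPolynomial_star (a b c : ℕ) (ha : 1 ≤ a) (hab : a ≤ b) (hbc : b ≤ c)
    (ℓ : ℕ) (hℓ : ℓ ≤ a) :
    ((∑ i ∈ Finset.range (a + 1), (X : ℤ[X]) ^ i) *
        (∑ i ∈ Finset.range (b + c + 2), (X : ℤ[X]) ^ i) -
      X * (∑ i ∈ Finset.range a, (X : ℤ[X]) ^ i) *
        (∑ i ∈ Finset.range (b + 1), (X : ℤ[X]) ^ i) *
        (∑ i ∈ Finset.range (c + 1), (X : ℤ[X]) ^ i)).coeff (a + b + c - ℓ) =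
      (1 - (ℓ : ℤ)) * (2 + (ℓ : ℤ)) / 2 := by
  set n := a + b + c - ℓ with hn
  rw [Polynomial.coeff_sub]
  -- second product as a sum
  have h2 : X * (∑ i ∈ Finset.range a, (X : ℤ[X]) ^ i) *
        (∑ i ∈ Finset.range (b + 1), (X : ℤ[X]) ^ i) *
        (∑ i ∈ Finset.range (c + 1), (X : ℤ[X]) ^ i)
      = ∑ i ∈ Finset.range a,
          ((∑ i ∈ Finset.range (b + 1), (X : ℤ[X]) ^ i) *
            (∑ i ∈ Finset.range (c + 1), (X : ℤ[X]) ^ i)) * X ^ (i + 1) := by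
    have hXA : X * (∑ i ∈ Finset.range a, (X : ℤ[X]) ^ i)
        = ∑ i ∈ Finset.range a, (X : ℤ[X]) ^ (i + 1) := by
      rw [Finset.mul_sum]
      exact Finset.sum_congr rfl fun i _ => (pow_succ' X i).symm
    calc X * (∑ i ∈ Finset.range a, (X : ℤ[X]) ^ i) *
        (∑ i ∈ Finset.range (b + 1), (X : ℤ[X]) ^ i) *
        (∑ i ∈ Finset.range (c + 1), (X : ℤ[X]) ^ i)
        = ((∑ i ∈ Finset.range (b + 1), (X : ℤ[X]) ^ i) *
            (∑ i ∈ Finset.range (c + 1), (X : ℤ[X]) ^ i)) *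
            (X * (∑ i ∈ Finset.range a, (X : ℤ[X]) ^ i)) := by ring
      _ = ∑ i ∈ Finset.range a,
          ((∑ i ∈ Finset.range (b + 1), (X : ℤ[X]) ^ i) *
            (∑ i ∈ Finset.range (c + 1), (X : ℤ[X]) ^ i)) * X ^ (i + 1) := by
          rw [hXA, Finset.mul_sum]
  rw [h2, Polynomial.finset_sum_coeff]
  have h3 : ∀ i ∈ Finset.range a,
      (((∑ i ∈ Finset.range (b + 1), (X : ℤ[X]) ^ i) *
            (∑ i ∈ Finset.range (c + 1), (X : ℤ[X]) ^ i)) * X ^ (i + 1)).coeff n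
        = ((ℓ + 2 + i - a : ℕ) : ℤ) := by
    intro i hi
    simp only [Finset.mem_range] at hi
    rw [Polynomial.coeff_mul_X_pow']
    have hin : i + 1 ≤ n := by omega
    rw [if_pos hin, coeff_geom_mul]
    congr 1
    omega
  rw [Finset.sum_congr rfl h3, coeff_geom_mul]
  have hT : ((min (a + 1) (n + 1) - (n + 1 - (b + c + 2)) : ℕ) : ℤ)
      = if ℓ = a then (ℓ:ℤ) + 1 else (ℓ:ℤ) + 2 := by
    by_cases he : ℓ = a
    · rw [if_pos he]
      have : (min (a + 1) (n + 1) - (n + 1 - (b + c + 2)) : ℕ) = ℓ + 1 := by omega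
      rw [this]; push_cast; ring
    · rw [if_neg he]
      have : (min (a + 1) (n + 1) - (n + 1 - (b + c + 2)) : ℕ) = ℓ + 2 := by omega
      rw [this]; push_cast; ring
  rw [hT]
  have hS := sum_tri a ℓ hℓ
  have key : ((if ℓ = a then (ℓ:ℤ) + 1 else (ℓ:ℤ) + 2) -
      ∑ i ∈ Finset.range a, ((ℓ + 2 + i - a : ℕ) : ℤ)) * 2 = (1 - (ℓ:ℤ)) * (2 + (ℓ:ℤ)) := by
    rw [sub_mul, hS]
    by_cases he : ℓ = a <;> simp [he] <;> ring
  rw [← key]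
  rw [Int.mul_ediv_cancel _ two_ne_zero]
end

section
/- Let a, b, c be integers with 1 ≤ a ≤ b ≤ c. Let φ be the (a+b+c+1)×(a+b+c+1) integer matrix in block form with row/column blocks of sizes a, b, c, 1 given by φ = [[J_a, K_{a,b}, K_{a,c}, K_{a,1}], [K_{b,a}, J_b, K_{b,c}, K_{b,1}], [K_{c,a}, K_{c,b}, J_c, K_{c,1}], [−K_{1,a}, −K_{1,b}, −K_{1,c}, −1]], and let m = (v_a, v_b, v_c, 2) be the row vector with 1 in every coordinate of the three blocks of sizes a, b, c and 2 in the last coordinate. Then for every integer r with 1 ≤ r ≤ a: m·φ^r = (2^{r−1}·v_a − Σ_{j=0}^{r−2} 2^{r−2−j}·ε_{a−j}^{(a)} − ε_{a−r+1}^{(a)}, 2^{r−1}·v_b − Σ_{j=0}^{r−2} 2^{r−2−j}·ε_{b−j}^{(b)} − ε_{b−r+1}^{(b)}, 2^{r−1}·v_c − Σ_{j=0}^{r−2} 2^{r−2−j}·ε_{c−j}^{(c)} − ε_{c−r+1}^{(c)}, 2^{r−1}). -/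
open Matrix Finset

/-- `J_p`: the `p × p` matrix with 1's in positions `(i+1, i)` and 0 elsewhere
(0-indexed: entry `(i, j)` is 1 iff `i = j + 1`). -/
def Jmat (p : ℕ) : Matrix (Fin p) (Fin p) ℤ :=
  Matrix.of fun i j => if (i : ℕ) = (j : ℕ) + 1 then 1 else 0

/-- `K_{p,q}`: the `p × q` matrix whose first row consists of 1's, other entries 0. -/
def Kmat (p q : ℕ) : Matrix (Fin p) (Fin q) ℤ :=
  Matrix.of fun i _ => if (i : ℕ) = 0 then 1 else 0

/-- The Coxeter matrix of (the path algebra of) the star tree `T_{a,b,c}`, in block form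
with row/column blocks of sizes `a, b, c, 1`:
`φ = [[J_a, K_{a,b}, K_{a,c}, K_{a,1}], [K_{b,a}, J_b, K_{b,c}, K_{b,1}],
[K_{c,a}, K_{c,b}, J_c, K_{c,1}], [−K_{1,a}, −K_{1,b}, −K_{1,c}, −1]]`. -/
def starCoxeter (a b c : ℕ) :
    Matrix ((Fin a ⊕ Fin b) ⊕ (Fin c ⊕ Fin 1)) ((Fin a ⊕ Fin b) ⊕ (Fin c ⊕ Fin 1)) ℤ :=
  Matrix.fromBlocks
    (Matrix.fromBlocks (Jmat a) (Kmat a b) (Kmat b a) (Jmat b))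
    (Matrix.fromBlocks (Kmat a c) (Kmat a 1) (Kmat b c) (Kmat b 1))
    (Matrix.fromBlocks (Kmat c a) (Kmat c b) (-(Kmat 1 a)) (-(Kmat 1 b)))
    (Matrix.fromBlocks (Jmat c) (Kmat c 1) (-(Kmat 1 c)) (-1))

def G (p r i : ℕ) : ℤ :=
  2 ^ (r - 1) - (∑ j ∈ Finset.range (r - 1), if i = p - 1 - j then 2 ^ (r - 2 - j) else 0)
    - (if i = p - r then 1 else 0)

lemma sum_fin_ite' {p : ℕ} (k : ℕ) (f : ℕ → ℤ) :
    (∑ i : Fin p, if (i : ℕ) = k then f (i : ℕ) else 0) = if k < p then f k else 0 := by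
  split
  · next h =>
    rw [Finset.sum_eq_single_of_mem ⟨k, h⟩ (Finset.mem_univ _)]
    · simp
    · intro i _ hi
      exact if_neg fun hik => hi (Fin.ext hik)
  · next h =>
    exact Finset.sum_eq_zero fun i _ => if_neg (by have := i.isLt; omega)

lemma sum_fin_ite_const {p : ℕ} (k : ℕ) (v : ℤ) :
    (∑ i : Fin p, if (i : ℕ) = k then v else 0) = if k < p then v else 0 :=
  sum_fin_ite' k (fun _ => v)

lemma vecMul_sc (a b c : ℕ) (x : Fin a → ℤ) (y : Fin b → ℤ) (z : Fin c → ℤ) (t : Fin 1 → ℤ) :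
    (Sum.elim (Sum.elim x y) (Sum.elim z t)) ᵥ* starCoxeter a b c =
      Sum.elim
        (Sum.elim
          (fun j : Fin a => (∑ i : Fin a, if (i : ℕ) = (j : ℕ) + 1 then x i else 0)
            + (∑ i : Fin b, if (i : ℕ) = 0 then y i else 0)
            + (∑ i : Fin c, if (i : ℕ) = 0 then z i else 0) - t 0)
          (fun j : Fin b => (∑ i : Fin a, if (i : ℕ) = 0 then x i else 0)
            + (∑ i : Fin b, if (i : ℕ) = (j : ℕ) + 1 then y i else 0)
            + (∑ i : Fin c, if (i : ℕ) = 0 then z i else 0) - t 0))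
        (Sum.elim
          (fun j : Fin c => (∑ i : Fin a, if (i : ℕ) = 0 then x i else 0)
            + (∑ i : Fin b, if (i : ℕ) = 0 then y i else 0)
            + (∑ i : Fin c, if (i : ℕ) = (j : ℕ) + 1 then z i else 0) - t 0)
          (fun _ : Fin 1 => (∑ i : Fin a, if (i : ℕ) = 0 then x i else 0)
            + (∑ i : Fin b, if (i : ℕ) = 0 then y i else 0)
            + (∑ i : Fin c, if (i : ℕ) = 0 then z i else 0) - t 0)) := by
  funext j
  have h1 : ∀ j : Fin 1, (1 : Matrix (Fin 1) (Fin 1) ℤ) 0 j = 1 := by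
    intro j; rw [Subsingleton.elim j 0]; simp
  rcases j with (j | j) | (j | j) <;>
    · simp [starCoxeter, Matrix.vecMul, dotProduct, Fintype.sum_sum_type,
        Jmat, Kmat, Matrix.fromBlocks, mul_ite, sub_eq_add_neg, Fin.sum_univ_one, h1]
      ring

lemma G_zero {p r : ℕ} (hr : 1 ≤ r) (h : r + 1 ≤ p) : G p r 0 = 2 ^ (r - 1) := by
  unfold G
  rw [Finset.sum_eq_zero, if_neg (by omega)]
  · ring
  · intro k hk
    simp only [Finset.mem_range] at hk
    exact if_neg (by omega)

lemma G_step {p n j : ℕ} (hn : 1 ≤ n) (hp : n + 1 ≤ p) (hj : j < p) :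
    (if j + 1 < p then G p n (j + 1) else 0) + 2 ^ (n - 1) = G p (n + 1) j := by
  obtain ⟨s, rfl⟩ : ∃ s, n = s + 1 := ⟨n - 1, by omega⟩
  simp only [Nat.add_sub_cancel]
  have e1 : G p (s + 1 + 1) j = 2 ^ (s + 1)
      - (∑ k ∈ Finset.range (s + 1), if j = p - 1 - k then 2 ^ (s - k) else 0)
      - (if j = p - (s + 2) then 1 else 0) := rfl
  rw [e1, Finset.sum_range_succ']
  by_cases h : j + 1 < p
  · rw [if_pos h]
    have e2 : G p (s + 1) (j + 1) = 2 ^ s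
        - (∑ k ∈ Finset.range s, if j + 1 = p - 1 - k then 2 ^ (s - 1 - k) else 0)
        - (if j + 1 = p - (s + 1) then 1 else 0) := rfl
    rw [e2]
    rw [if_neg (show ¬ j = p - 1 - 0 by omega)]
    rw [show (∑ k ∈ Finset.range s, if j = p - 1 - (k + 1) then (2:ℤ) ^ (s - (k + 1)) else 0)
        = ∑ k ∈ Finset.range s, if j + 1 = p - 1 - k then (2:ℤ) ^ (s - 1 - k) else 0 from
      Finset.sum_congr rfl fun k hk => by
        simp only [Finset.mem_range] at hk
        exact if_congr (by omega) (by rw [show s - (k + 1) = s - 1 - k from by omega]) rfl]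
    rw [if_congr (show j + 1 = p - (s + 1) ↔ j = p - (s + 2) from by omega) rfl rfl]
    ring
  · rw [if_neg h]
    rw [Finset.sum_eq_zero (fun k hk => if_neg
      (by simp only [Finset.mem_range] at hk; omega)),
      if_pos (show j = p - 1 - 0 by omega), if_neg (show ¬ j = p - (s + 2) by omega)]
    simp only [Nat.sub_zero]
    ring

lemma main_aux (a b c : ℕ) (ha : 1 ≤ a) (hab : a ≤ b) (hbc : b ≤ c)
    (r : ℕ) (hr : 1 ≤ r) (hra : r ≤ a) :
    (Sum.elim (Sum.elim (fun _ => (1:ℤ)) fun _ => 1) (Sum.elim (fun _ => 1) fun _ => 2))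
        ᵥ* (starCoxeter a b c) ^ r =
      Sum.elim (Sum.elim (fun i : Fin a => G a r (i : ℕ)) (fun i : Fin b => G b r (i : ℕ)))
        (Sum.elim (fun i : Fin c => G c r (i : ℕ)) (fun _ : Fin 1 => 2 ^ (r - 1))) := by
  revert hra
  induction r, hr using Nat.le_induction with
  | base =>
    intro _
    rw [pow_one, vecMul_sc]
    funext j
    rcases j with (j | j) | (j | j) <;>
    · simp only [Sum.elim_inl, Sum.elim_inr, sum_fin_ite_const, G, Finset.range_zero,
        Finset.sum_empty, pow_zero, Nat.sub_self]
      have h1 := j.isLt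
      split_ifs <;> omega
  | succ n hn ih =>
    intro hna
    rw [pow_succ, ← Matrix.vecMul_vecMul, ih (by omega), vecMul_sc]
    have hb0 : (0:ℕ) < b := by omega
    have hc0 : (0:ℕ) < c := by omega
    funext j
    have hGa : ∀ i : Fin a, G a n (i:ℕ) = G a n (i:ℕ) := fun _ => rfl
    rcases j with (j | j) | (j | j) <;>
    · simp only [Sum.elim_inl, Sum.elim_inr, sum_fin_ite', Nat.add_sub_cancel,
        if_pos (show (0:ℕ) < a by omega), if_pos hb0, if_pos hc0,
        G_zero hn (by omega : n + 1 ≤ a), G_zero hn (by omega : n + 1 ≤ b),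
        G_zero hn (by omega : n + 1 ≤ c)]
      first
      | linarith [G_step hn (show n + 1 ≤ a by omega) j.isLt]
      | linarith [G_step hn (show n + 1 ≤ b by omega) j.isLt]
      | linarith [G_step hn (show n + 1 ≤ c by omega) j.isLt]
      | · have h2 : (2:ℤ) ^ n = 2 ^ (n - 1) * 2 := by
            rw [← pow_succ]; congr 1; omega
          linarith

/-- For the Coxeter matrix `φ` of the star tree `T_{a,b,c}` (`1 ≤ a ≤ b ≤ c`) and the
row vector `m = (v_a, v_b, v_c, 2)`, for every `1 ≤ r ≤ a`:
`m·φ^r = (2^{r−1}v_a − Σ_{j=0}^{r−2} 2^{r−2−j}ε_{a−j}^{(a)} − ε_{a−r+1}^{(a)}, …, 2^{r−1})`,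
where the `ε`'s are written 0-indexed (1-based position `p−j` is 0-based index `p−1−j`). -/
theorem vecMul_pow_starCoxeter (a b c : ℕ) (ha : 1 ≤ a) (hab : a ≤ b) (hbc : b ≤ c)
    (m : (Fin a ⊕ Fin b) ⊕ (Fin c ⊕ Fin 1) → ℤ)
    (hm : m = Sum.elim (Sum.elim (fun _ => 1) (fun _ => 1)) (Sum.elim (fun _ => 1) (fun _ => 2)))
    (r : ℕ) (hr : 1 ≤ r) (hra : r ≤ a) :
    m ᵥ* (starCoxeter a b c) ^ r =
      Sum.elim
        (Sum.elim
          (fun i : Fin a => 2 ^ (r - 1) -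
            (∑ j ∈ Finset.range (r - 1), if (i : ℕ) = a - 1 - j then 2 ^ (r - 2 - j) else 0) -
            (if (i : ℕ) = a - r then 1 else 0))
          (fun i : Fin b => 2 ^ (r - 1) -
            (∑ j ∈ Finset.range (r - 1), if (i : ℕ) = b - 1 - j then 2 ^ (r - 2 - j) else 0) -
            (if (i : ℕ) = b - r then 1 else 0)))
        (Sum.elim
          (fun i : Fin c => 2 ^ (r - 1) -
            (∑ j ∈ Finset.range (r - 1), if (i : ℕ) = c - 1 - j then 2 ^ (r - 2 - j) else 0) -
            (if (i : ℕ) = c - r then 1 else 0))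
          (fun _ : Fin 1 => 2 ^ (r - 1))) := by
  subst hm
  rw [main_aux a b c ha hab hbc r hr hra]
  rfl
end

section
/- Let b, c be integers with 2 ≤ b ≤ c. Let φ be the (1+b+c+1)×(1+b+c+1) integer matrix in block form with row/column blocks of sizes 1, b, c, 1 given by φ = [[J_1, K_{1,b}, K_{1,c}, K_{1,1}], [K_{b,1}, J_b, K_{b,c}, K_{b,1}], [K_{c,1}, K_{c,b}, J_c, K_{c,1}], [−K_{1,1}, −K_{1,b}, −K_{1,c}, −1]], and let m = (1, v_b, v_c, 2) be the row vector with 1 in every coordinate of the first three blocks and 2 in the last coordinate. Then m·φ = (0, v_b − ε_b^{(b)}, v_c − ε_c^{(c)}, 1), and for every integer r with 2 ≤ r ≤ b: m·φ^r = (F_{r−2}, F_{r−1}·v_b − Σ_{k=0}^{r−2} F_{r−2−k}·ε_{b−k}^{(b)} − ε_{b−r+1}^{(b)}, F_{r−1}·v_c − Σ_{k=0}^{r−2} F_{r−2−k}·ε_{c−k}^{(c)} − ε_{c−r+1}^{(c)}, F_{r−1}), where F denotes the Fibonacci sequence. -/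
/-!
Split a row vector as `(x, f, g, d)` along the blocks of `φ`. Then `φ` maps it to
`(x J + f₀ + g₀ - d, f J + x₀ + g₀ - d, g J + x₀ + f₀ - d, x₀ + f₀ + g₀ - d)`, and right
multiplication by `J` shifts a vector one place towards the front, dropping its head.
Along the orbit of `m`, as long as `r < b ≤ c` the heads `f₀ = g₀` of the two long blocks
still equal the last coordinate `F_{r-1}`, so both long blocks are shifted and receive `F_{r-2}`,
while the first and last coordinates follow the Fibonacci recursion.
The closed form for `m·φ^r` then follows by induction on `r`.
-/

open Matrix Finset

/-- The Fibonacci sequence with `F_0 = F_1 = 1` and `F_{k+2} = F_{k+1} + F_k`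
(so `F k = Nat.fib (k + 1)`), valued in `ℤ`. -/
def fibF (k : ℕ) : ℤ := Nat.fib (k + 1)

lemma vecMul_Jmat {p : ℕ} (f : Fin p → ℤ) (j : Fin p) :
    (f ᵥ* Jmat p) j = if h : (j : ℕ) + 1 < p then f ⟨j + 1, h⟩ else 0 := by
  simp only [vecMul, dotProduct, Jmat, of_apply, mul_ite, mul_one, mul_zero]
  split_ifs with h
  · rw [Finset.sum_eq_single ⟨j + 1, h⟩ (fun i _ hi => if_neg fun e => hi (Fin.ext e))
      (by simp)]
    simp
  · exact Finset.sum_eq_zero fun i _ => if_neg (by omega)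

lemma Jmat_one : Jmat 1 = 0 := by
  ext i j
  simp [Jmat]

lemma vecMul_Kmat {p q : ℕ} [NeZero p] (f : Fin p → ℤ) : f ᵥ* Kmat p q = fun _ => f 0 := by
  ext j
  simp [vecMul, dotProduct, Kmat, Fin.val_eq_zero_iff]

lemma vecMul_starCoxeter {a b c : ℕ} [NeZero a] [NeZero b] [NeZero c]
    (x : Fin a → ℤ) (f : Fin b → ℤ) (g : Fin c → ℤ) (d : Fin 1 → ℤ) :
    Sum.elim (Sum.elim x f) (Sum.elim g d) ᵥ* starCoxeter a b c =
      Sum.elim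
        (Sum.elim (x ᵥ* Jmat a + fun _ => f 0 + g 0 - d 0)
          (f ᵥ* Jmat b + fun _ => x 0 + g 0 - d 0))
        (Sum.elim (g ᵥ* Jmat c + fun _ => x 0 + f 0 - d 0)
          (fun _ => x 0 + f 0 + g 0 - d 0)) := by
  simp only [starCoxeter, vecMul_fromBlocks, Function.comp_def, Sum.elim_inl, Sum.elim_inr,
    vecMul_neg, vecMul_Kmat, vecMul_one]
  ext ((i | i) | (i | i)) <;> simp only [Sum.elim_inl, Sum.elim_inr, Pi.add_apply, Pi.neg_apply,
    Fin.fin_one_eq_zero] <;> ring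

lemma Finset.sum_range_ite_eq_tsub {M : Type*} [AddCommMonoid M] {p n i : ℕ} (hi : i < p)
    (hn : n ≤ p) (f : ℕ → M) :
    ∑ k ∈ range n, (if i = p - 1 - k then f k else 0) =
      if p - 1 - i < n then f (p - 1 - i) else 0 := by
  simp only [← Finset.mem_range, ← Finset.sum_ite_eq]
  refine Finset.sum_congr rfl fun k hk => if_congr ?_ rfl rfl
  rw [Finset.mem_range] at hk
  omega

/-- The entry of a `v`-block of `m·φ^r` at distance `t` from the end of the block.
Counting from the end turns right multiplication by `J` into `t ↦ t - 1`, and writing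
`F_{r-1}` as `Nat.fib r` (so that `F_{-1} = 0`) lets `m·φ` fit the pattern at `r = 1`. -/
def coxeterOrbitEntry (r t : ℕ) : ℤ :=
  Nat.fib r - (if t + 1 < r then (Nat.fib (r - 1 - t) : ℤ) else 0) - if t + 1 = r then 1 else 0

lemma coxeterOrbitEntry_of_le {r t : ℕ} (h : r ≤ t) : coxeterOrbitEntry r t = Nat.fib r := by
  simp [coxeterOrbitEntry, show ¬ t + 1 < r by omega, show t + 1 ≠ r by omega]

lemma coxeterOrbitEntry_add_two_zero (r : ℕ) : coxeterOrbitEntry (r + 2) 0 = Nat.fib r := by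
  simp [coxeterOrbitEntry, Nat.fib_add_two]

lemma coxeterOrbitEntry_add_two_succ (r t : ℕ) :
    coxeterOrbitEntry (r + 2) (t + 1) = Nat.fib r + coxeterOrbitEntry (r + 1) t := by
  simp only [coxeterOrbitEntry, Nat.fib_add_two, show r + 2 - 1 - (t + 1) = r + 1 - 1 - t by omega,
    add_lt_add_iff_right, add_left_inj]
  push_cast
  ring

def coxeterOrbitBlock (p r : ℕ) : Fin p → ℤ := fun i => coxeterOrbitEntry r (p - 1 - i)

lemma coxeterOrbitBlock_zero {p r : ℕ} [NeZero p] (h : r < p) :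
    coxeterOrbitBlock p r 0 = Nat.fib r :=
  coxeterOrbitEntry_of_le (by rw [Fin.val_zero]; omega)

lemma coxeterOrbitBlock_one (p : ℕ) :
    coxeterOrbitBlock p 1 = fun i : Fin p => 1 - if (i : ℕ) = p - 1 then 1 else 0 := by
  ext i
  rw [coxeterOrbitBlock, coxeterOrbitEntry, if_neg (by omega),
    if_congr (show p - 1 - i + 1 = 1 ↔ (i : ℕ) = p - 1 by omega) rfl rfl]
  simp

lemma vecMul_Jmat_coxeterOrbitBlock_add {p : ℕ} (r : ℕ) (j : Fin p) :
    (coxeterOrbitBlock p (r + 1) ᵥ* Jmat p) j + Nat.fib r = coxeterOrbitBlock p (r + 2) j := by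
  rw [vecMul_Jmat]
  split_ifs with h
  · simp only [coxeterOrbitBlock]
    rw [show p - 1 - j = p - 1 - (j + 1) + 1 by omega, coxeterOrbitEntry_add_two_succ]
    ring
  · simp [coxeterOrbitBlock, show p - 1 - j = 0 by omega, coxeterOrbitEntry_add_two_zero]

def coxeterOrbit (b c r : ℕ) : (Fin 1 ⊕ Fin b) ⊕ (Fin c ⊕ Fin 1) → ℤ :=
  Sum.elim (Sum.elim (fun _ => Nat.fib (r - 1)) (coxeterOrbitBlock b r))
    (Sum.elim (coxeterOrbitBlock c r) (fun _ => Nat.fib r))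

lemma vecMul_starCoxeter_one_eq_coxeterOrbit_one {b c : ℕ} [NeZero b] [NeZero c] :
    Sum.elim (Sum.elim (fun _ => 1) (fun _ => 1)) (Sum.elim (fun _ => 1) (fun _ => 2)) ᵥ*
      starCoxeter 1 b c = coxeterOrbit b c 1 := by
  rw [vecMul_starCoxeter]
  ext ((i | i) | (i | i))
  · simp [coxeterOrbit, Jmat_one]
  · simp only [coxeterOrbit, Sum.elim_inl, Sum.elim_inr, Pi.add_apply, vecMul_Jmat,
      coxeterOrbitBlock_one]
    split_ifs <;> omega
  · simp only [coxeterOrbit, Sum.elim_inl, Sum.elim_inr, Pi.add_apply, vecMul_Jmat,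
      coxeterOrbitBlock_one]
    split_ifs <;> omega
  · simp [coxeterOrbit]

lemma coxeterOrbit_vecMul_starCoxeter {b c r : ℕ} [NeZero b] [NeZero c] (hrb : r + 1 < b)
    (hbc : b ≤ c) : coxeterOrbit b c (r + 1) ᵥ* starCoxeter 1 b c = coxeterOrbit b c (r + 2) := by
  rw [coxeterOrbit, vecMul_starCoxeter]
  simp only [coxeterOrbitBlock_zero hrb, coxeterOrbitBlock_zero (hrb.trans_le hbc),
    add_sub_cancel_right]
  ext ((i | i) | (i | i))
  · simp [coxeterOrbit, Jmat_one]
  · exact vecMul_Jmat_coxeterOrbitBlock_add r i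
  · exact vecMul_Jmat_coxeterOrbitBlock_add r i
  · simp [coxeterOrbit, Nat.fib_add_two]

lemma vecMul_pow_starCoxeter_one_eq_coxeterOrbit {b c : ℕ} [NeZero b] [NeZero c] (hbc : b ≤ c)
    (r : ℕ) (hrb : r + 1 ≤ b) :
    Sum.elim (Sum.elim (fun _ => 1) (fun _ => 1)) (Sum.elim (fun _ => 1) (fun _ => 2)) ᵥ*
      starCoxeter 1 b c ^ (r + 1) = coxeterOrbit b c (r + 1) := by
  induction r with
  | zero => rw [pow_one, vecMul_starCoxeter_one_eq_coxeterOrbit_one]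
  | succ r ih =>
    rw [pow_succ, ← vecMul_vecMul, ih (by omega), coxeterOrbit_vecMul_starCoxeter (by omega) hbc]

lemma coxeterOrbitBlock_eq_sum {p r : ℕ} (hr : 2 ≤ r) (hrp : r ≤ p) (i : Fin p) :
    coxeterOrbitBlock p r i = fibF (r - 1) -
      (∑ k ∈ Finset.range (r - 1), if (i : ℕ) = p - 1 - k then fibF (r - 2 - k) else 0) -
      (if (i : ℕ) = p - r then 1 else 0) := by
  rw [Finset.sum_range_ite_eq_tsub i.isLt (by omega)]
  simp only [coxeterOrbitBlock, coxeterOrbitEntry, fibF, show r - 1 + 1 = r by omega]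
  split_ifs <;>
    first | omega | rw [show r - 2 - (p - 1 - i) + 1 = r - 1 - (p - 1 - i) by omega]

/-- The `ε`'s are 0-indexed: position `p − k` of `ε^{(p)}` is index `p − 1 − k`. -/
theorem vecMul_pow_starCoxeter_one (b c : ℕ) (hb : 2 ≤ b) (hbc : b ≤ c)
    (m : (Fin 1 ⊕ Fin b) ⊕ (Fin c ⊕ Fin 1) → ℤ)
    (hm : m = Sum.elim (Sum.elim (fun _ => 1) (fun _ => 1)) (Sum.elim (fun _ => 1) (fun _ => 2))) :
    (m ᵥ* starCoxeter 1 b c =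
      Sum.elim
        (Sum.elim (fun _ : Fin 1 => 0)
          (fun i : Fin b => 1 - if (i : ℕ) = b - 1 then 1 else 0))
        (Sum.elim (fun i : Fin c => 1 - if (i : ℕ) = c - 1 then 1 else 0)
          (fun _ : Fin 1 => 1))) ∧
    ∀ r : ℕ, 2 ≤ r → r ≤ b →
      m ᵥ* (starCoxeter 1 b c) ^ r =
        Sum.elim
          (Sum.elim (fun _ : Fin 1 => fibF (r - 2))
            (fun i : Fin b => fibF (r - 1) -
              (∑ k ∈ Finset.range (r - 1), if (i : ℕ) = b - 1 - k then fibF (r - 2 - k) else 0) -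
              (if (i : ℕ) = b - r then 1 else 0)))
          (Sum.elim
            (fun i : Fin c => fibF (r - 1) -
              (∑ k ∈ Finset.range (r - 1), if (i : ℕ) = c - 1 - k then fibF (r - 2 - k) else 0) -
              (if (i : ℕ) = c - r then 1 else 0))
            (fun _ : Fin 1 => fibF (r - 1))) := by
  subst hm
  have : NeZero b := ⟨by omega⟩
  have : NeZero c := ⟨by omega⟩
  refine ⟨?_, fun r hr hrb => ?_⟩
  · rw [vecMul_starCoxeter_one_eq_coxeterOrbit_one]
    simp [coxeterOrbit, coxeterOrbitBlock_one]
  · obtain ⟨s, rfl⟩ : ∃ s, r = s + 2 := ⟨r - 2, by omega⟩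
    rw [vecMul_pow_starCoxeter_one_eq_coxeterOrbit hbc (s + 1) hrb, coxeterOrbit]
    ext ((i | i) | (i | i))
    · simp [fibF]
    · exact coxeterOrbitBlock_eq_sum hr hrb i
    · exact coxeterOrbitBlock_eq_sum hr (hrb.trans hbc) i
    · simp [fibF]
end

section
/- Let b, c be integers with 3 ≤ b ≤ c and set n = b + c + 2. Let Φ be the (n+1)×(n+1) integer matrix in block form with row/column blocks of sizes 1, 1, b, c, 1 defined as follows: the (1,1) entry is 0; the rest of the first row is (−(v_1 − ε_1^{(1)}), −(v_b − ε_b^{(b)}), −(v_c − ε_c^{(c)}), −1) = (0, −(v_b − ε_b^{(b)}), −(v_c − ε_c^{(c)}), −1); the rest of the first column is ((ε_1^{(1)})ᵀ, (ε_1^{(b)})ᵀ, (ε_1^{(c)})ᵀ, −2); and the remaining (b+c+2)×(b+c+2) block is φ = [[J_1, K_{1,b}, K_{1,c}, K_{1,1}], [K_{b,1}, J_b, K_{b,c}, K_{b,1}], [K_{c,1}, K_{c,b}, J_c, K_{c,1}], [−K_{1,1}, −K_{1,b}, −K_{1,c}, −1]]. Write the characteristic polynomial det(x·I − Φ) = Σ_{i=0}^{n+1}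 λ_i x^i. Then λ_{n−r} = 0 for all 1 ≤ r ≤ b−1, and λ_{n−b} = −1 − δ_{bc} < 0, where δ_{bc} = 1 if b = c and δ_{bc} = 0 otherwise. -/
open Matrix Finset

/-- The Coxeter matrix `Φ` of the canonical algebra `C_{a,b,c}`, in block form
with row/column blocks of sizes `1, a, b, c, 1`: the `(1,1)` entry is `0`; the rest of
the first row is `(−(v_a − ε_a^{(a)}), −(v_b − ε_b^{(b)}), −(v_c − ε_c^{(c)}), −1)`;
the rest of the first column is `((ε_1^{(a)})ᵀ, (ε_1^{(b)})ᵀ, (ε_1^{(c)})ᵀ, −2)`; and the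
remaining `(a+b+c+1) × (a+b+c+1)` block is the Coxeter matrix of the star tree
`T_{a,b,c}`. (0-indexed: `ε_p^{(p)}` has its 1 at index `p − 1`, `ε_1^{(p)}` at index 0.) -/
def canonicalCoxeter (a b c : ℕ) :
    Matrix (Fin 1 ⊕ ((Fin a ⊕ Fin b) ⊕ (Fin c ⊕ Fin 1)))
      (Fin 1 ⊕ ((Fin a ⊕ Fin b) ⊕ (Fin c ⊕ Fin 1))) ℤ :=
  Matrix.fromBlocks
    (0 : Matrix (Fin 1) (Fin 1) ℤ)
    (Matrix.of fun _ j =>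
      Sum.elim
        (Sum.elim (fun i : Fin a => (if (i : ℕ) = a - 1 then 1 else 0) - 1)
          (fun i : Fin b => (if (i : ℕ) = b - 1 then 1 else 0) - 1))
        (Sum.elim (fun i : Fin c => (if (i : ℕ) = c - 1 then 1 else 0) - 1)
          (fun _ : Fin 1 => -1)) j)
    (Matrix.of fun i _ =>
      Sum.elim
        (Sum.elim (fun i : Fin a => if (i : ℕ) = 0 then 1 else 0)
          (fun i : Fin b => if (i : ℕ) = 0 then 1 else 0))
        (Sum.elim (fun i : Fin c => if (i : ℕ) = 0 then 1 else 0)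
          (fun _ : Fin 1 => -2)) i)
    (starCoxeter a b c)

/-!
Reorder the vertices so that a 5 × 5 core (the extension vertex, the arm of length 1, the
first vertices of the two long arms, and the sink) comes first. On the remaining arm vertices
`x·I − Φ` is block diagonal with lower bidiagonal blocks `x·I − J_m`, which send
`(x^(m-1-k))_k` to `x^m e_0`. After scaling two core columns by `x^(b-1)` and `x^(c-1)`,
column operations with these vectors clear the block below the core, and the Schur block is a
5 × 5 matrix in `x` and the geometric sums `1 + x + ⋯ + x^(b-1)`, `1 + x + ⋯ + x^(c-1)`, with
determinant `(x + 1)(x^(b+1) − 1)(x^(c+1) − 1)`.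
-/

open Polynomial

theorem Matrix.det_fromBlocks_mul_det_of_mul_add_mul_eq_zero {R m n : Type*} [CommRing R]
    [Fintype m] [DecidableEq m] [Fintype n] [DecidableEq n]
    (A E : Matrix m m R) (B : Matrix m n R) (C W : Matrix n m R) (D : Matrix n n R)
    (h : C * E + D * W = 0) :
    (fromBlocks A B C D).det * E.det = (A * E + B * W).det * D.det := by
  have hE : (fromBlocks E 0 W 1 : Matrix (m ⊕ n) (m ⊕ n) R).det = E.det := by
    rw [det_fromBlocks_zero₁₂, det_one, mul_one]
  rw [← hE, ← det_mul, fromBlocks_multiply, h]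
  simp only [Matrix.mul_zero, Matrix.mul_one, zero_add]
  exact det_fromBlocks_zero₂₁ _ _ _

theorem Fin.sum_pow_sub_one_sub {R : Type*} [CommSemiring R] (x : R) (m : ℕ) :
    ∑ k : Fin m, x ^ (m - 1 - k) = ∑ i ∈ range m, x ^ i := by
  rw [Fin.sum_univ_eq_sum_range (fun k => x ^ (m - 1 - k)), ← sum_range_reflect]
  exact sum_congr rfl fun j hj => by rw [mem_range] at hj; congr 1; omega

theorem Fin.sum_ite_val_eq_sub_one_pow {R : Type*} [CommSemiring R] (x : R) {m : ℕ}
    (hm : 1 ≤ m) :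
    ∑ k : Fin m, (if (k : ℕ) = m - 1 then x ^ (m - 1 - k) else 0) = 1 := by
  rw [Fin.sum_univ_eq_sum_range (fun k => if k = m - 1 then x ^ (m - 1 - k) else 0),
    sum_ite_eq', if_pos (by simp; omega), Nat.sub_self, pow_zero]

theorem charpoly_Jmat (m : ℕ) : (Jmat m).charpoly = X ^ m := by
  rw [charpoly, det_of_isLowerTriangular]
  · simp [Jmat]
  · intro i j (hij : i < j)
    have : (i : ℕ) ≠ j + 1 := by omega
    simp [Jmat, hij.ne, this]

theorem charmatrix_Jmat_mulVec_pow (m : ℕ) :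
    charmatrix (Jmat m) *ᵥ (fun k : Fin m => X ^ (m - 1 - k)) =
      fun i : Fin m => if (i : ℕ) = 0 then X ^ m else 0 := by
  funext ⟨i, hi⟩
  simp only [mulVec, dotProduct, charmatrix_apply, sub_mul, sum_sub_distrib, diagonal_apply,
    ite_mul, zero_mul, sum_ite_eq, mem_univ, if_true, Jmat, of_apply, apply_ite C, C_1, C_0,
    one_mul]
  rcases i with _ | i
  · simp [← pow_succ', Nat.sub_add_cancel hi]
  · rw [sum_eq_single ⟨i, by omega⟩ (fun k _ hk => if_neg fun h => hk (Fin.ext (by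
      simp at h ⊢; omega))) (by simp)]
    rw [if_pos rfl, if_neg i.succ_ne_zero, ← pow_succ', show m - 1 - (i + 1) + 1 = m - 1 - i by
      omega, sub_self]

namespace CanonicalCoxeter

/-- The core `Fin 5` lists the extension vertex, the arm of length 1, the first vertices of the
two long arms, and the sink; `Fin β ⊕ Fin γ` lists the other vertices of the long arms. -/
def coreArmEquiv (β γ : ℕ) :
    Fin 5 ⊕ (Fin β ⊕ Fin γ) ≃ Fin 1 ⊕ ((Fin 1 ⊕ Fin (β + 1)) ⊕ (Fin (γ + 1) ⊕ Fin 1)) where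
  toFun := Sum.elim
    ![Sum.inl 0, Sum.inr (Sum.inl (Sum.inl 0)), Sum.inr (Sum.inl (Sum.inr 0)),
      Sum.inr (Sum.inr (Sum.inl 0)), Sum.inr (Sum.inr (Sum.inr 0))]
    (Sum.elim (fun k => Sum.inr (Sum.inl (Sum.inr k.succ)))
      (fun k => Sum.inr (Sum.inr (Sum.inl k.succ))))
  invFun := Sum.elim (fun _ => Sum.inl 0)
    (Sum.elim
      (Sum.elim (fun _ => Sum.inl 1) (Fin.cases (Sum.inl 2) (fun k => Sum.inr (Sum.inl k))))
      (Sum.elim (Fin.cases (Sum.inl 3) (fun k => Sum.inr (Sum.inr k))) (fun _ => Sum.inl 4)))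
  left_inv := by
    rintro (p | k | k)
    · fin_cases p <;> rfl
    · rfl
    · rfl
  right_inv := by
    rintro (e | (e | k) | (k | e))
    · simp [Fin.fin_one_eq_zero e]
    · simp [Fin.fin_one_eq_zero e]
    · induction k using Fin.cases <;> rfl
    · induction k using Fin.cases <;> rfl
    · simp [Fin.fin_one_eq_zero e]

def coreBlock : Matrix (Fin 5) (Fin 5) ℤ :=
  !![0, 0, -1, -1, -1;
     1, 0, 1, 1, 1;
     1, 1, 0, 1, 1;
     1, 1, 1, 0, 1;
     -2, -1, -1, -1, -1]

def coreArmBlock (β γ : ℕ) : Matrix (Fin 5) (Fin β ⊕ Fin γ) ℤ :=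
  Matrix.of fun p => Sum.elim
    (fun k : Fin β => ![(if (k : ℕ) = β - 1 then 1 else 0) - 1, 1, 0, 1, -1] p)
    (fun k : Fin γ => ![(if (k : ℕ) = γ - 1 then 1 else 0) - 1, 1, 1, 0, -1] p)

def armCoreBlock (β γ : ℕ) : Matrix (Fin β ⊕ Fin γ) (Fin 5) ℤ :=
  Matrix.of fun q p => Sum.elim
    (fun k : Fin β => if (k : ℕ) = 0 ∧ p = 2 then 1 else 0)
    (fun k : Fin γ => if (k : ℕ) = 0 ∧ p = 3 then 1 else 0) q

theorem submatrix_coreArmEquiv (β γ : ℕ) (hβ : 1 ≤ β) (hγ : 1 ≤ γ) :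
    (canonicalCoxeter 1 (β + 1) (γ + 1)).submatrix (coreArmEquiv β γ) (coreArmEquiv β γ) =
      fromBlocks coreBlock (coreArmBlock β γ) (armCoreBlock β γ)
        (fromBlocks (Jmat β) 0 0 (Jmat γ)) := by
  ext (p | k | k) (q | l | l)
  all_goals try fin_cases p
  all_goals try fin_cases q
  all_goals
    simp [coreArmEquiv, canonicalCoxeter, starCoxeter, Jmat, Kmat, coreBlock, coreArmBlock,
      armCoreBlock, Fin.succ_ne_zero]
  all_goals omega

noncomputable def armPowBlock (β γ : ℕ) : Matrix (Fin β ⊕ Fin γ) (Fin 5) ℤ[X] :=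
  Matrix.of fun q p => Sum.elim
    (fun k : Fin β => if p = 2 then X ^ (β - 1 - k) else 0)
    (fun k : Fin γ => if p = 3 then X ^ (γ - 1 - k) else 0) q

noncomputable def coreScaling (β γ : ℕ) : Matrix (Fin 5) (Fin 5) ℤ[X] :=
  diagonal ![1, 1, X ^ β, X ^ γ, 1]

theorem armCoreBlock_mul_add_mul_armPowBlock (β γ : ℕ) :
    -(armCoreBlock β γ).map C * coreScaling β γ +
        charmatrix (fromBlocks (Jmat β) 0 0 (Jmat γ)) * armPowBlock β γ = 0 := by
  have hβ := congrFun (charmatrix_Jmat_mulVec_pow β)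
  have hγ := congrFun (charmatrix_Jmat_mulVec_pow γ)
  simp only [mulVec, dotProduct] at hβ hγ
  rw [charmatrix_fromBlocks]
  refine Matrix.ext fun q p => ?_
  rcases q with k | k <;> fin_cases p <;>
    simp [mul_apply, Fin.sum_univ_five, Fintype.sum_sum_type, armCoreBlock, coreScaling,
      armPowBlock, hβ, hγ]

/-- `G` and `H` stand for `1 + x + ⋯ + x^β` and `1 + x + ⋯ + x^γ`,
so `(x - 1) * G + 1 = x^(β+1)`. -/
def schurCore {R : Type*} [CommRing R] (x G H : R) : Matrix (Fin 5) (Fin 5) R :=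
  !![x, 0, G - 1, H - 1, 1;
     -1, x, -G, -H, -1;
     -1, -1, (x - 1) * G + 1, -H, -1;
     -1, -1, -G, (x - 1) * H + 1, -1;
     2, 1, G, H, x + 1]

theorem det_schurCore {R : Type*} [CommRing R] (x G H : R) :
    (schurCore x G H).det = (x + 1) * ((x - 1) * (x * G + 1)) * ((x - 1) * (x * H + 1)) := by
  simp [schurCore, det_succ_row_zero, Fin.sum_univ_succ, Fin.succAbove_of_castSucc_lt,
    Fin.succAbove_of_lt_succ]
  ring

theorem charmatrix_coreBlock_mul_add_mul_armPowBlock (β γ : ℕ) (hβ : 1 ≤ β) (hγ : 1 ≤ γ) :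
    charmatrix coreBlock * coreScaling β γ + -(coreArmBlock β γ).map C * armPowBlock β γ =
      schurCore X (∑ i ∈ range (β + 1), X ^ i) (∑ i ∈ range (γ + 1), X ^ i) := by
  refine Matrix.ext fun p q => ?_
  fin_cases p <;> fin_cases q <;>
    simp [charmatrix_apply, coreBlock, coreScaling, coreArmBlock, armPowBlock, mul_apply,
      Fin.sum_univ_five, Fintype.sum_sum_type, schurCore, mul_geom_sum, ← pow_succ'] <;>
    simp only [sub_mul, ite_mul, one_mul, zero_mul, sum_sub_distrib,
      Fin.sum_ite_val_eq_sub_one_pow _ hβ, Fin.sum_ite_val_eq_sub_one_pow _ hγ,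
      Fin.sum_pow_sub_one_sub, sum_range_succ] <;>
    ring

end CanonicalCoxeter

open CanonicalCoxeter in
theorem charpoly_canonicalCoxeter_one (b c : ℕ) (hb : 2 ≤ b) (hc : 2 ≤ c) :
    (canonicalCoxeter 1 b c).charpoly = (X + 1) * (X ^ (b + 1) - 1) * (X ^ (c + 1) - 1) := by
  obtain ⟨β, rfl⟩ : ∃ β, b = β + 1 := ⟨b - 1, by omega⟩
  obtain ⟨γ, rfl⟩ : ∃ γ, c = γ + 1 := ⟨c - 1, by omega⟩
  have hblocks : (canonicalCoxeter 1 (β + 1) (γ + 1)).charpoly =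
      (fromBlocks coreBlock (coreArmBlock β γ) (armCoreBlock β γ)
        (fromBlocks (Jmat β) 0 0 (Jmat γ))).charpoly := by
    rw [← submatrix_coreArmEquiv β γ (by omega) (by omega),
      ← charpoly_reindex (coreArmEquiv β γ).symm]
    rfl
  have harms : (fromBlocks (Jmat β) 0 0 (Jmat γ)).charpoly = X ^ β * X ^ γ := by
    rw [charpoly_fromBlocks_zero₁₂, charpoly_Jmat, charpoly_Jmat]
  have hscale : (coreScaling β γ).det = X ^ β * X ^ γ := by
    simp [coreScaling, Fin.prod_univ_five]
  refine mul_right_cancel₀ (mul_ne_zero (pow_ne_zero β X_ne_zero) (pow_ne_zero γ X_ne_zero)) ?_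
  rw [hblocks, ← hscale, charpoly, charmatrix_fromBlocks,
    det_fromBlocks_mul_det_of_mul_add_mul_eq_zero _ _ _ _ _ _
      (armCoreBlock_mul_add_mul_armPowBlock β γ),
    charmatrix_coreBlock_mul_add_mul_armPowBlock β γ (by omega) (by omega), ← charpoly, harms,
    hscale, det_schurCore, ← geom_sum_succ, ← geom_sum_succ, mul_geom_sum, mul_geom_sum]

/-- Coefficients of the Coxeter polynomial of the canonical algebra `C_{1,b,c}`,
`3 ≤ b ≤ c`: with `n = b + c + 2` and `det(x·I − Φ) = Σ_i λ_i x^i`,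
`λ_{n−r} = 0` for `1 ≤ r ≤ b − 1`, and `λ_{n−b} = −1 − δ_{bc} < 0`. -/
theorem coeff_coxeterPolynomial_canonical_one (b c : ℕ) (hb : 3 ≤ b) (hbc : b ≤ c)
    (n : ℕ) (hn : n = b + c + 2) :
    (∀ r : ℕ, 1 ≤ r → r ≤ b - 1 →
      (Matrix.charpoly (canonicalCoxeter 1 b c)).coeff (n - r) = 0) ∧
    (Matrix.charpoly (canonicalCoxeter 1 b c)).coeff (n - b) =
      -1 - (if b = c then 1 else 0) ∧
    (Matrix.charpoly (canonicalCoxeter 1 b c)).coeff (n - b) < 0 := by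
  have hexpand : (canonicalCoxeter 1 b c).charpoly = X ^ (b + c + 3) + X ^ (b + c + 2) -
      X ^ (c + 2) - X ^ (c + 1) - X ^ (b + 2) - X ^ (b + 1) + X + 1 := by
    rw [charpoly_canonicalCoxeter_one b c (by omega) (by omega)]
    ring
  subst hn
  have hcoeff : (canonicalCoxeter 1 b c).charpoly.coeff (b + c + 2 - b) =
      -1 - if b = c then 1 else 0 := by
    simp only [hexpand, coeff_add, coeff_sub, coeff_X_pow, coeff_X, coeff_one]
    split_ifs <;> omega
  refine ⟨fun r hr1 hr2 => ?_, hcoeff, ?_⟩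
  · simp only [hexpand, coeff_add, coeff_sub, coeff_X_pow, coeff_X, coeff_one]
    split_ifs <;> omega
  · rw [hcoeff]
    split_ifs <;> norm_num
end
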